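/- Let G, H be groupoids and X : Hᵒᵖ × G ⥤ Type an (H,G)-bi-set such that for every object η of H the G-set X(η, -) : G ⥤ Type is free and finite. Then the projection q : GXH ⥤ H from the double translation groupoid is a finite weak cover: for every object η₀ of H, the homotopy fiber of q over η₀ is thin and has finitely many connected components. -/

import Mathlib

open CategoryTheory Opposite

universe w v₁ v₂ u₁ u₂

variable {G : Type u₁} {H : Type u₂} [Groupoid.{v₁} G] [Groupoid.{v₂} H]

namespace BiSet

variable (X : Hᵒᵖ × G ⥤ Type w)

/-- The left action `x ↦ g • x` of a bi-set `X : Hᵒᵖ × G ⥤ Type`. -/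
def lAct {γ γ' : G} (g : γ ⟶ γ') (η : H) : X.obj (op η, γ) → X.obj (op η, γ') :=
  X.map ((𝟙 (op η), g) : (op η, γ) ⟶ (op η, γ'))

/-- The right action `x ↦ x • h` of a bi-set `X : Hᵒᵖ × G ⥤ Type`. -/
def rAct {η' η : H} (h : η' ⟶ η) (γ : G) : X.obj (op η, γ) → X.obj (op η', γ) :=
  X.map ((h.op, 𝟙 γ) : (op η, γ) ⟶ (op η', γ))

variable {X}

theorem lAct_id {γ : G} (η : H) (x : X.obj (op η, γ)) : lAct X (𝟙 γ) η x = x := by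
  unfold lAct
  exact Functor.map_id_apply X (op η, γ) x

theorem rAct_id {η : H} (γ : G) (x : X.obj (op η, γ)) : rAct X (𝟙 η) γ x = x := by
  unfold rAct
  exact Functor.map_id_apply X (op η, γ) x

theorem lAct_comp {γ γ' γ'' : G} (g : γ ⟶ γ') (g' : γ' ⟶ γ'') (η : H)
    (x : X.obj (op η, γ)) : lAct X (g ≫ g') η x = lAct X g' η (lAct X g η x) := by
  unfold lAct
  rw [← Functor.map_comp_apply, prod_comp]
  simp [Prod.mkHom]

theorem rAct_comp {η η' η'' : H} (h : η ⟶ η') (h' : η' ⟶ η'') (γ : G)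
    (x : X.obj (op η'', γ)) : rAct X (h ≫ h') γ x = rAct X h γ (rAct X h' γ x) := by
  unfold rAct
  rw [← Functor.map_comp_apply, prod_comp]
  simp [Prod.mkHom]

theorem lAct_rAct {γ γ' : G} {η' η : H} (g : γ ⟶ γ') (h : η' ⟶ η) (x : X.obj (op η, γ)) :
    lAct X g η' (rAct X h γ x) = rAct X h γ' (lAct X g η x) := by
  unfold lAct rAct
  rw [← Functor.map_comp_apply, ← Functor.map_comp_apply, prod_comp, prod_comp]
  simp [Prod.mkHom]

end BiSet

/-- Objects of the double translation groupoid `GXH` of a bi-set `X : Hᵒᵖ × G ⥤ Type`: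
triples `(γ, x, η)` with `x ∈ X(η, γ)`. -/
structure DoubleTranslation (X : Hᵒᵖ × G ⥤ Type w) where
  γ : G
  η : H
  x : X.obj (op η, γ)

namespace DoubleTranslation

variable {X : Hᵒᵖ × G ⥤ Type w}

/-- The double translation groupoid: morphisms `a ⟶ b` are pairs `(g, h)` with
`g : a.γ ⟶ b.γ`, `h : a.η ⟶ b.η` and `g • a.x = b.x • h`. -/
instance : Category (DoubleTranslation X) where
  Hom a b := {p : (a.γ ⟶ b.γ) × (a.η ⟶ b.η) //
      BiSet.lAct X p.1 a.η a.x = BiSet.rAct X p.2 b.γ b.x}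
  id a := ⟨(𝟙 a.γ, 𝟙 a.η), by rw [BiSet.lAct_id, BiSet.rAct_id]⟩
  comp {a b c} f g := ⟨(f.1.1 ≫ g.1.1, f.1.2 ≫ g.1.2), by
    rw [BiSet.lAct_comp, f.2, BiSet.lAct_rAct, g.2, ← BiSet.rAct_comp]⟩
  id_comp f := by apply Subtype.ext; dsimp; simp
  comp_id f := by apply Subtype.ext; dsimp; simp
  assoc f g h := by apply Subtype.ext; dsimp; simp

/-- The projection `q : GXH ⥤ H` of the double translation groupoid. -/
def toH (X : Hᵒᵖ × G ⥤ Type w) : DoubleTranslation X ⥤ H where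
  obj a := a.η
  map f := f.1.2
  map_id _ := rfl
  map_comp _ _ := rfl

end DoubleTranslation

open BiSet

/-- Freeness for a `Type`-valued functor: all orbit maps `g ↦ g • x` are injective. -/
def GSetFree {C : Type u} [Category.{v} C] (T : C ⥤ Type w) : Prop :=
  ∀ ⦃c c' : C⦄ (x : T.obj c), Function.Injective fun g : c ⟶ c' => T.map g x

/-- The relation on `Σ c, T c` whose quotient is the colimit of `T` in `Type`. -/
def ColimRel {C : Type u} [Category.{v} C] (T : C ⥤ Type w) :
    (Σ c : C, T.obj c) → (Σ c : C, T.obj c) → Prop :=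
  fun x y => ∃ g : x.1 ⟶ y.1, T.map g x.2 = y.2

/-- Finiteness for a `Type`-valued functor: its colimit in `Type` is a finite set. -/
def GSetFinite {C : Type u} [Category.{v} C] (T : C ⥤ Type w) : Prop :=
  Finite (Quot (ColimRel T))

/-- A functor is a *finite weak cover* if each of its homotopy fibers (structured-arrow
categories) is thin and has finitely many connected components. -/
def FiniteWeakCover {K : Type u₃} {C : Type u₄} [Category.{v₃} K] [Category.{v₄} C]
    (m : K ⥤ C) : Prop :=
  ∀ c : C, Quiver.IsThin (StructuredArrow c m) ∧
    Finite (ConnectedComponents (StructuredArrow c m))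

/-! An object of the homotopy fibre of `q` over `η₀` is a point `x ∈ X(η, γ)` with an arrow
`h : η₀ ⟶ η`; since `H` is a groupoid, `x • h ∈ X(η₀, γ)` loses no information, and two objects
are joined by a morphism iff their translates lie in the same `G`-orbit of `X(η₀, -)`. So the
components of the fibre inject into the finite orbit set of `X(η₀, -)`. A morphism `(g, k)` of
the fibre is forced: `k = h⁻¹ ≫ h'` by the structure-arrow condition, and then `g` by freeness,
because `g • x = y • k`. -/

theorem colimRel_equivalence {C : Type*} [Groupoid C] (T : C ⥤ Type*) :
    _root_.Equivalence (ColimRel T) where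
  refl _ := ⟨𝟙 _, T.map_id_apply _ _⟩
  symm := fun ⟨g, hg⟩ => ⟨Groupoid.inv g, by simp [← hg]⟩
  trans := fun ⟨g, hg⟩ ⟨g', hg'⟩ => ⟨g ≫ g', by simp [hg, hg']⟩

theorem finite_connectedComponents_of_nonempty_hom_iff {K α : Type*} [Category K]
    {r : α → α → Prop} (hr : _root_.Equivalence r) [Finite (Quot r)] (φ : K → α)
    (hφ : ∀ A B, r (φ A) (φ B) ↔ Nonempty (A ⟶ B)) : Finite (ConnectedComponents K) := by
  have zigzag_iff {A B : K} : Zigzag A B ↔ r (φ A) (φ B) := by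
    refine ⟨fun h => ?_, fun h => Zigzag.of_hom ((hφ _ _).mp h).some⟩
    induction h with
    | refl => exact hr.refl _
    | tail _ hzag ih =>
      rcases hzag with ⟨⟨f⟩⟩ | ⟨⟨f⟩⟩
      · exact hr.trans ih ((hφ _ _).mpr ⟨f⟩)
      · exact hr.trans ih (hr.symm ((hφ _ _).mpr ⟨f⟩))
  refine Finite.of_injective
    (Quotient.lift (Quot.mk r ∘ φ) fun _ _ h => Quot.sound (zigzag_iff.mp h)) ?_
  rintro ⟨A⟩ ⟨B⟩ hAB
  exact Quotient.sound (zigzag_iff.mpr (hr.eqvGen_iff.mp (Quot.eq.mp hAB)))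

namespace BiSet

variable {X : Hᵒᵖ × G ⥤ Type w}

theorem rAct_injective {η' η : H} (h : η' ⟶ η) (γ : G) : Function.Injective (rAct X h γ) :=
  Function.LeftInverse.injective (g := rAct X (Groupoid.inv h) γ) fun x => by
    rw [← rAct_comp, Groupoid.inv_comp, rAct_id]

theorem lAct_eq_rAct_iff_of_comp_eq {γ γ' : G} {η₀ η η' : H} {h : η₀ ⟶ η} {h' : η₀ ⟶ η'}
    {k : η ⟶ η'} (hk : h ≫ k = h') (g : γ ⟶ γ') (x : X.obj (op η, γ))
    (y : X.obj (op η', γ')) :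
    lAct X g η x = rAct X k γ' y ↔ lAct X g η₀ (rAct X h γ x) = rAct X h' γ' y := by
  rw [lAct_rAct, ← hk, rAct_comp]
  exact (rAct_injective h γ').eq_iff.symm

end BiSet

namespace DoubleTranslation

variable {X : Hᵒᵖ × G ⥤ Type w} {η₀ : H}

theorem isThin_structuredArrow_toH
    (hfree : ∀ η : H, GSetFree ((Functor.curry.obj X).obj (op η))) :
    Quiver.IsThin (StructuredArrow η₀ (toH X)) := by
  refine fun A B => ⟨fun f₁ f₂ => StructuredArrow.hom_ext _ _ ?_⟩
  have hk : f₁.right.1.2 = f₂.right.1.2 :=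
    (cancel_epi A.hom).mp ((StructuredArrow.w f₁).trans (StructuredArrow.w f₂).symm)
  have hg : f₁.right.1.1 = f₂.right.1.1 :=
    hfree A.right.η A.right.x ((f₁.right.2.trans (by rw [hk])).trans f₂.right.2.symm)
  exact Subtype.ext (Prod.ext hg hk)

def fiberPoint (A : StructuredArrow η₀ (toH X)) : Σ γ : G, X.obj (op η₀, γ) :=
  ⟨A.right.γ, rAct X A.hom A.right.γ A.right.x⟩

theorem colimRel_fiberPoint_iff (A B : StructuredArrow η₀ (toH X)) :
    ColimRel ((Functor.curry.obj X).obj (op η₀)) (fiberPoint A) (fiberPoint B) ↔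
      Nonempty (A ⟶ B) := by
  constructor
  · rintro ⟨g, hg⟩
    have hk : A.hom ≫ Groupoid.inv A.hom ≫ B.hom = B.hom := by simp
    exact ⟨StructuredArrow.homMk
      ⟨(g, Groupoid.inv A.hom ≫ B.hom), (lAct_eq_rAct_iff_of_comp_eq hk _ _ _).mpr hg⟩ hk⟩
  · rintro ⟨f⟩
    exact ⟨f.right.1.1,
      (lAct_eq_rAct_iff_of_comp_eq (StructuredArrow.w f) _ _ _).mp f.right.2⟩

end DoubleTranslation

/-- If the `G`-set `X(η, -)` is free and finite for every object `η` of `H`, then the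
projection `q : GXH ⥤ H` from the double translation groupoid is a finite weak cover. -/
theorem doubleTranslation_toH_finiteWeakCover (X : Hᵒᵖ × G ⥤ Type w)
    (hfree : ∀ η : H, GSetFree ((Functor.curry.obj X).obj (op η)))
    (hfin : ∀ η : H, GSetFinite ((Functor.curry.obj X).obj (op η))) :
    FiniteWeakCover (DoubleTranslation.toH X) := by
  intro η₀
  let T := (Functor.curry.obj X).obj (op η₀)
  have : Finite (Quot (ColimRel T)) := hfin η₀
  exact ⟨DoubleTranslation.isThin_structuredArrow_toH hfree,
    finite_connectedComponents_of_nonempty_hom_iff (colimRel_equivalence T)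
      DoubleTranslation.fiberPoint DoubleTranslation.colimRel_fiberPoint_iff⟩
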